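/- arXiv:1907.10504 — 3 statements merged into one kernel-verified Lean document; each statement's English description precedes it below -/
import Mathlib

section
/- Let X and Y be orbit-finite sets with atoms and let F be an equivariant set of finitely supported functions from X to Y (with the conjugation action (π·f)(x) = π·f(π⁻¹·x)). Then F is orbit-finite if and only if there exists k ∈ ℕ such that every function in F is supported by a set of at most k atoms. -/
/-- Atoms: a fixed countably infinite set. -/
abbrev Atom : Type := ℕ

/-- Atom automorphisms: bijections of the atoms. -/
abbrev AtomPerm : Type := Equiv.Perm Atom

/-- `x` (in a set with atoms `X`) is supported by the finite set `A` of atoms. -/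
def SupportedBy {X : Type*} [MulAction AtomPerm X] (A : Finset Atom) (x : X) : Prop :=
  ∀ π : AtomPerm, (∀ a ∈ A, π a = a) → π • x = x

def FinitelySupported {X : Type*} [MulAction AtomPerm X] (x : X) : Prop :=
  ∃ A : Finset Atom, SupportedBy A x

def IsLeastSupport {X : Type*} [MulAction AtomPerm X] (A : Finset Atom) (x : X) : Prop :=
  SupportedBy A x ∧ ∀ B : Finset Atom, SupportedBy B x → A ⊆ B

/-- A function `f : X → Y` is supported by `A` if `f (π • x) = π • f x`
for every `A`-automorphism `π`. -/
def FunSupportedBy {X Y : Type*} [MulAction AtomPerm X] [MulAction AtomPerm Y]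
    (A : Finset Atom) (f : X → Y) : Prop :=
  ∀ π : AtomPerm, (∀ a ∈ A, π a = a) → ∀ x : X, f (π • x) = π • f x

/-- A function is equivariant if it commutes with all atom automorphisms. -/
def FunEquivariant {X Y : Type*} [MulAction AtomPerm X] [MulAction AtomPerm Y]
    (f : X → Y) : Prop :=
  ∀ (π : AtomPerm) (x : X), f (π • x) = π • f x

/-- A subset `S` of a set with atoms is supported by `A`
(as an element of the powerset with the induced action). -/
def SetSupportedBy {Z : Type*} [MulAction AtomPerm Z] (A : Finset Atom) (S : Set Z) : Prop :=
  ∀ π : AtomPerm, (∀ a ∈ A, π a = a) → ∀ z : Z, z ∈ S ↔ π • z ∈ S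

/-- A set with atoms is orbit-finite if every element is finitely supported and, for some
finite set `A` of atoms, it is a union of finitely many orbits of the group of
`A`-automorphisms. -/
def OrbitFinite (X : Type*) [MulAction AtomPerm X] : Prop :=
  (∀ x : X, FinitelySupported x) ∧
  ∃ (A : Finset Atom) (reps : Finset X),
    ∀ x : X, ∃ r ∈ reps, ∃ π : AtomPerm, (∀ a ∈ A, π a = a) ∧ π • r = x

/-- The multiplication of a monoid with atoms is finitely supported. -/
def MulFinitelySupported (M : Type*) [Monoid M] [MulAction AtomPerm M] : Prop :=
  ∃ A : Finset Atom, ∀ π : AtomPerm, (∀ a ∈ A, π a = a) →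
    ∀ x y : M, π • (x * y) = (π • x) * (π • y)

/-- An orbit-finite monoid: the underlying set is orbit-finite and
multiplication is finitely supported. -/
def OrbitFiniteMonoid (M : Type*) [Monoid M] [MulAction AtomPerm M] : Prop :=
  OrbitFinite M ∧ MulFinitelySupported M

/-- `x` is an infix of `y`. -/
def MInfix {M : Type*} [Monoid M] (x y : M) : Prop := ∃ a b : M, y = a * x * b

/-- `x` is a prefix of `y`. -/
def MPrefix {M : Type*} [Monoid M] (x y : M) : Prop := ∃ a : M, y = x * a

/-- `x` is a suffix of `y`. -/
def MSuffix {M : Type*} [Monoid M] (x y : M) : Prop := ∃ a : M, y = a * x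

def JEquiv {M : Type*} [Monoid M] (x y : M) : Prop := MInfix x y ∧ MInfix y x
def REquiv {M : Type*} [Monoid M] (x y : M) : Prop := MPrefix x y ∧ MPrefix y x
def LEquiv {M : Type*} [Monoid M] (x y : M) : Prop := MSuffix x y ∧ MSuffix y x

/-- A sequence of monoid elements is smooth if every element of the sequence can be
recovered from the product of the whole sequence by multiplying on both sides. -/
def SmoothSeq {M : Type*} [Monoid M] (l : List M) : Prop :=
  ∀ x ∈ l, ∃ y z : M, y * l.prod * z = x

/-- The conjugation action of atom automorphisms on functions between sets with atoms. -/
def conjAct {X Y : Type*} [MulAction AtomPerm X] [MulAction AtomPerm Y]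
    (π : AtomPerm) (f : X → Y) : X → Y :=
  fun x => π • f (π⁻¹ • x)

/-!
An orbit-finite `X` is a finite union of orbits of `T`-automorphisms for every finite `T`, not just
for the one in its definition: an automorphism fixing `T` moves a support of any orbit
representative into `T` together with a fixed finite set of fresh atoms. A function supported by
`S` is therefore determined by its values on finitely many points, and each value is supported by
`S` together with a support of the point; so only finitely many functions are supported by a fixed
finite set. If all functions in `F` have supports of at most `k` atoms, an automorphism moves each
support into `{0, …, k - 1}`, so `F` is the union of the orbits of the finitely many functions of
`F` supported by `{0, …, k - 1}`. Conversely, conjugating by `π` turns a common support of the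
orbit representatives into a support of the same size.
-/

open Set

section Perm

variable {α : Type*}

lemma exists_perm_eqOn_of_injOn [Infinite α] {s : Set α} (hs : s.Finite) {j : α → α}
    (hj : InjOn j s) : ∃ π : Equiv.Perm α, EqOn π j s := by
  have hlt : Cardinal.mk s < Cardinal.mk α :=
    (Cardinal.lt_aleph0_iff_set_finite.mpr hs).trans_le (Cardinal.aleph0_le_mk α)
  obtain ⟨π, hπ⟩ := Cardinal.extend_function_of_lt ⟨s.domRestrict j, injOn_iff_injective.mp hj⟩
    hlt ⟨Equiv.refl α⟩
  exact ⟨π, fun a ha => hπ ⟨a, ha⟩⟩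

lemma exists_perm_fixing_mapsTo [Infinite α] [DecidableEq α] {T D E : Finset α}
    (hTE : Disjoint T E) (hcard : D.card ≤ E.card) :
    ∃ σ : Equiv.Perm α, (∀ a ∈ T, σ a = a) ∧ ∀ a ∈ D, σ a ∈ T ∪ E := by
  obtain ⟨e⟩ : Nonempty ((D \ T : Finset α) ↪ E) :=
    Function.Embedding.nonempty_of_card_le <| by
      simpa using (Finset.card_le_card Finset.sdiff_subset).trans hcard
  let j : α → α := fun a => if h : a ∈ D \ T then e ⟨a, h⟩ else a
  have hj : InjOn j ↑(T ∪ D) := by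
    intro a ha b hb hab
    simp only [j] at hab
    split_ifs at hab with h₁ h₂ h₂
    · simpa using e.injective (Subtype.ext hab)
    · have hbT : b ∈ T := by grind
      exact absurd (hab ▸ (e _).2) (Finset.disjoint_left.mp hTE hbT)
    · have haT : a ∈ T := by grind
      exact absurd (hab ▸ (e _).2) (Finset.disjoint_left.mp hTE haT)
    · exact hab
  obtain ⟨σ, hσ⟩ := exists_perm_eqOn_of_injOn (T ∪ D).finite_toSet hj
  refine ⟨σ, fun a ha => ?_, fun a ha => ?_⟩
  · rw [hσ (Finset.mem_union_left _ ha)]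
    simp [j, ha]
  · rw [hσ (Finset.mem_union_right _ ha)]
    by_cases hT : a ∈ T <;> simp [j, hT, ha]

lemma exists_disjoint_finset_card_eq [Infinite α] [DecidableEq α] (T : Finset α) (n : ℕ) :
    ∃ E : Finset α, Disjoint T E ∧ E.card = n := by
  obtain ⟨s, hs⟩ := Infinite.exists_subset_card_eq α (T.card + n)
  obtain ⟨E, hEs, hE⟩ := Finset.exists_subset_card_eq (s := s \ T) (n := n)
    (by have := Finset.le_card_sdiff T s; omega)
  exact ⟨E, Finset.disjoint_of_subset_right hEs Finset.disjoint_sdiff, hE⟩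

end Perm

section Atoms

variable {X Y : Type*} [MulAction AtomPerm X] [MulAction AtomPerm Y]

lemma conjAct_one (f : X → Y) : conjAct 1 f = f := by
  funext x
  simp [conjAct]

lemma conjAct_mul (π σ : AtomPerm) (f : X → Y) : conjAct π (conjAct σ f) = conjAct (π * σ) f := by
  funext x
  simp only [conjAct, smul_smul, mul_inv_rev]

lemma SupportedBy.smul_eq_smul {B : Finset Atom} {r : X} (hB : SupportedBy B r)
    {π π' : AtomPerm} (h : ∀ a ∈ B, π a = π' a) : π • r = π' • r := by
  have hfix : (π'⁻¹ * π) • r = r := hB _ fun a ha => by simp [h a ha]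
  simpa [smul_smul] using congrArg (π' • ·) hfix

lemma SupportedBy.finite_smul_of_mapsTo {B : Finset Atom} {r : X} (hB : SupportedBy B r)
    {U : Set Atom} (hU : U.Finite) :
    {x : X | ∃ ρ : AtomPerm, MapsTo ρ B U ∧ ρ • r = x}.Finite := by
  let restr : AtomPerm → B → Atom := fun ρ b => ρ b
  have hsub : {x : X | ∃ ρ : AtomPerm, MapsTo ρ B U ∧ ρ • r = x} ⊆
      ⋃ g ∈ pi univ fun _ => U, (· • r) '' {ρ | restr ρ = g} := by
    rintro x ⟨ρ, hρ, rfl⟩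
    exact mem_biUnion (fun b _ => hρ b.2) ⟨ρ, rfl, rfl⟩
  refine ((Finite.pi fun _ => hU).biUnion fun g _ => Subsingleton.finite ?_).subset hsub
  rintro _ ⟨ρ, rfl, rfl⟩ _ ⟨ρ', hρ', rfl⟩
  exact hB.smul_eq_smul fun a ha => (congrFun hρ' ⟨a, ha⟩).symm

lemma FunSupportedBy.mono {B B' : Finset Atom} {f : X → Y} (hf : FunSupportedBy B f)
    (hBB' : B ⊆ B') : FunSupportedBy B' f :=
  fun π hπ => hf π fun a ha => hπ a (hBB' ha)

lemma FunSupportedBy.supportedBy_apply {S T : Finset Atom} {g : X → Y} {x : X}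
    (hg : FunSupportedBy S g) (hx : SupportedBy T x) : SupportedBy (S ∪ T) (g x) := by
  intro π hπ
  rw [← hg π fun a ha => hπ a (Finset.mem_union_left _ ha),
    hx π fun a ha => hπ a (Finset.mem_union_right _ ha)]

lemma FunSupportedBy.conjAct {B : Finset Atom} {f : X → Y} (hf : FunSupportedBy B f)
    (π : AtomPerm) : FunSupportedBy (B.image π) (conjAct π f) := by
  intro σ hσ x
  have hfix : ∀ a ∈ B, (π⁻¹ * σ * π) a = a := fun a ha => by
    simp [hσ _ (Finset.mem_image_of_mem π ha)]
  have key := hf _ hfix (π⁻¹ • x)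
  have hx : π⁻¹ • σ • x = (π⁻¹ * σ * π) • π⁻¹ • x := by simp [smul_smul]
  simp only [_root_.conjAct]
  rw [hx, key, smul_smul, smul_smul, mul_assoc, mul_inv_cancel_left]

lemma exists_funSupportedBy_of_finset (s : Finset (X → Y))
    (hs : ∀ f ∈ s, ∃ A : Finset Atom, FunSupportedBy A f) :
    ∃ A : Finset Atom, ∀ f ∈ s, FunSupportedBy A f := by
  classical
  choose A hA using hs
  exact ⟨s.attach.biUnion fun f => A f f.2, fun f hf => (hA f hf).mono
    (Finset.subset_biUnion_of_mem (fun f => A f.1 f.2) (Finset.mem_attach s ⟨f, hf⟩))⟩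

lemma OrbitFinite.exists_finite_reps (hX : OrbitFinite X) (T : Finset Atom) :
    ∃ W : Set X, W.Finite ∧ ∀ x : X, ∃ σ : AtomPerm, (∀ a ∈ T, σ a = a) ∧ σ • x ∈ W := by
  obtain ⟨hsupp, _, reps, hreps⟩ := hX
  choose B hB using hsupp
  obtain ⟨E, hTE, hE⟩ := exists_disjoint_finset_card_eq T (reps.sup fun r => (B r).card)
  refine ⟨⋃ r ∈ (reps : Set X), {x | ∃ ρ : AtomPerm, MapsTo ρ (B r) ↑(T ∪ E) ∧ ρ • r = x},
    reps.finite_toSet.biUnion fun r _ => (hB r).finite_smul_of_mapsTo (T ∪ E).finite_toSet,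
    fun x => ?_⟩
  obtain ⟨r, hr, π, -, rfl⟩ := hreps x
  obtain ⟨σ, hσT, hσ⟩ := exists_perm_fixing_mapsTo (D := (B r).image π) hTE
    (Finset.card_image_le.trans (hE ▸ Finset.le_sup (f := fun r => (B r).card) hr))
  exact ⟨σ, hσT, mem_biUnion hr
    ⟨σ * π, fun a ha => hσ _ (Finset.mem_image_of_mem π ha), (smul_smul _ _ _).symm⟩⟩

lemma OrbitFinite.finite_supportedBy (hX : OrbitFinite X) (T : Finset Atom) :
    {x : X | SupportedBy T x}.Finite := by
  obtain ⟨W, hW, hrep⟩ := hX.exists_finite_reps T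
  refine hW.subset fun x hx => ?_
  obtain ⟨σ, hσ, hσx⟩ := hrep x
  rwa [hx σ hσ] at hσx

lemma OrbitFinite.finite_funSupportedBy (hX : OrbitFinite X) (hY : OrbitFinite Y)
    (S : Finset Atom) : {g : X → Y | FunSupportedBy S g}.Finite := by
  obtain ⟨W, hW, hrep⟩ := hX.exists_finite_reps S
  choose B hB using hX.1
  have : Finite W := hW.to_subtype
  refine Finite.of_injOn (f := fun g (w : W) => g w)
    (t := pi univ fun w : W => {y | SupportedBy (S ∪ B w) y})
    (fun g hg w _ => FunSupportedBy.supportedBy_apply hg (hB w))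
    (fun g hg g' hg' hgg' => funext fun x => ?_) (Finite.pi fun _ => hY.finite_supportedBy _)
  obtain ⟨σ, hσ, hσx⟩ := hrep x
  have hx := congrFun hgg' ⟨_, hσx⟩
  simp only [hg σ hσ, hg' σ hσ] at hx
  exact smul_left_cancel σ hx

lemma exists_card_bound_of_subset_conjAct_orbits {F : Set (X → Y)} {reps : Finset (X → Y)}
    (hreps : ∀ r ∈ reps, ∃ A : Finset Atom, FunSupportedBy A r)
    (hF : ∀ f ∈ F, ∃ r ∈ reps, ∃ π : AtomPerm, conjAct π r = f) :
    ∃ k : ℕ, ∀ f ∈ F, ∃ A : Finset Atom, A.card ≤ k ∧ FunSupportedBy A f := by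
  obtain ⟨C, hC⟩ := exists_funSupportedBy_of_finset reps hreps
  refine ⟨C.card, fun f hf => ?_⟩
  obtain ⟨r, hr, π, rfl⟩ := hF f hf
  exact ⟨C.image π, Finset.card_image_le, (hC r hr).conjAct π⟩

lemma exists_finite_conjAct_reps_of_card_bound (hX : OrbitFinite X) (hY : OrbitFinite Y)
    {F : Set (X → Y)} (hF : ∀ (π : AtomPerm) (f : X → Y), f ∈ F → conjAct π f ∈ F) {k : ℕ}
    (hk : ∀ f ∈ F, ∃ A : Finset Atom, A.card ≤ k ∧ FunSupportedBy A f) :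
    ∃ reps : Set (X → Y), reps.Finite ∧ F = ⋃ r ∈ reps, range fun π : AtomPerm => conjAct π r := by
  refine ⟨F ∩ {g | FunSupportedBy (Finset.range k) g},
    (hX.finite_funSupportedBy hY _).subset inter_subset_right, Subset.antisymm (fun f hf => ?_) ?_⟩
  · obtain ⟨B, hBk, hB⟩ := hk f hf
    obtain ⟨σ, -, hσ⟩ := exists_perm_fixing_mapsTo (T := ∅) (D := B) (E := Finset.range k)
      (Finset.disjoint_empty_left _) (by simpa using hBk)
    have hσf : FunSupportedBy (Finset.range k) (conjAct σ f) :=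
      (hB.conjAct σ).mono fun a ha => by
        obtain ⟨b, hb, rfl⟩ := Finset.mem_image.mp ha
        simpa using hσ b hb
    have hσ_inv : conjAct σ⁻¹ (conjAct σ f) = f := by
      rw [conjAct_mul, inv_mul_cancel, conjAct_one]
    exact mem_biUnion ⟨hF σ f hf, hσf⟩ ⟨σ⁻¹, hσ_inv⟩
  · simp only [iUnion₂_subset_iff]
    rintro r ⟨hr, -⟩ _ ⟨π, rfl⟩
    exact hF π r hr

end Atoms

theorem orbitFinite_function_set_iff_bounded_supports_general
    {X Y : Type*} [MulAction AtomPerm X] [MulAction AtomPerm Y]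
    (hX : OrbitFinite X) (hY : OrbitFinite Y) (F : Set (X → Y))
    (heqv : ∀ (π : AtomPerm) (f : X → Y), f ∈ F → conjAct π f ∈ F) :
    ((∀ f ∈ F, ∃ A : Finset Atom, FunSupportedBy A f) ∧
        ∃ (A : Finset Atom) (reps : Finset (X → Y)),
          F = ⋃ r ∈ (reps : Set (X → Y)),
            {f : X → Y | ∃ π : AtomPerm, (∀ a ∈ A, π a = a) ∧ conjAct π r = f})
      ↔ ∃ k : ℕ, ∀ f ∈ F, ∃ A : Finset Atom, A.card ≤ k ∧ FunSupportedBy A f := by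
  constructor
  · rintro ⟨hfs, A, reps, rfl⟩
    refine exists_card_bound_of_subset_conjAct_orbits
      (fun r hr => hfs r (mem_biUnion hr ⟨1, fun _ _ => rfl, conjAct_one r⟩)) fun f hf => ?_
    obtain ⟨r, hr, π, -, rfl⟩ := mem_iUnion₂.mp hf
    exact ⟨r, hr, π, rfl⟩
  · rintro ⟨k, hk⟩
    obtain ⟨reps, hreps, hF⟩ := exists_finite_conjAct_reps_of_card_bound hX hY heqv hk
    refine ⟨fun f hf => (hk f hf).imp fun _ => And.right, ∅, hreps.toFinset, ?_⟩
    simpa [Set.ext_iff] using hF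

/-- Let `X` and `Y` be orbit-finite sets with atoms and let `F` be an equivariant set of
finitely supported functions from `X` to `Y` (with the conjugation action). Then `F` is
orbit-finite if and only if there exists `k` such that every function in `F` is supported
by a set of at most `k` atoms. -/
theorem orbitFinite_function_set_iff_bounded_supports
    {X Y : Type*} [MulAction AtomPerm X] [MulAction AtomPerm Y]
    (hX : OrbitFinite X) (hY : OrbitFinite Y) (F : Set (X → Y))
    (hfs : ∀ f ∈ F, ∃ A : Finset Atom, FunSupportedBy A f)
    (heqv : ∀ (π : AtomPerm) (f : X → Y), f ∈ F → conjAct π f ∈ F) :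
    ((∀ f ∈ F, ∃ A : Finset Atom, FunSupportedBy A f) ∧
        ∃ (A : Finset Atom) (reps : Finset (X → Y)),
          F = ⋃ r ∈ (reps : Set (X → Y)),
            {f : X → Y | ∃ π : AtomPerm, (∀ a ∈ A, π a = a) ∧ conjAct π r = f})
      ↔ ∃ k : ℕ, ∀ f ∈ F, ∃ A : Finset Atom, A.card ≤ k ∧ FunSupportedBy A f :=
  orbitFinite_function_set_iff_bounded_supports_general hX hY F heqv
end

section
/- (Locality of smoothness) Let M be an orbit-finite monoid. A sequence x₁, …, x_n of elements of M is smooth if and only if for every i < n the two-element sequence x_i, x_{i+1} is smooth. -/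
/-!
Smoothness of a pair `x, y` says that both `x` and `y` lie in `M (x y) M`. In an orbit-finite
monoid all positive powers of an element are supported by one finite set of atoms, and only
finitely many elements share a given finite support, so every element has an idempotent power.
Iterating `x = a x (y b)` until `(y b)ⁿ` is idempotent then turns `x ∈ M (x y) M` into
`x ∈ (x y) M`, and symmetrically `y ∈ M (x y)`. Chaining these relations along the sequence gives
`xᵢ ∈ (xᵢ ⋯ xₙ) M` and `xᵢ ∈ M (x₁ ⋯ xᵢ)`, hence `xᵢ ∈ M (x₁ ⋯ xₙ) M`.
-/

section Support

variable {X : Type*} [MulAction AtomPerm X]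

lemma SupportedBy.mono {A B : Finset Atom} {x : X} (h : SupportedBy A x) (hAB : A ⊆ B) :
    SupportedBy B x :=
  fun π hπ => h π fun a ha => hπ a (hAB ha)

lemma SupportedBy.smul_congr {A : Finset Atom} {x : X} (h : SupportedBy A x) {π π' : AtomPerm}
    (hπ : ∀ a ∈ A, π a = π' a) : π • x = π' • x := by
  have hfix : (π'⁻¹ * π) • x = x := h _ fun a ha => by simp [Equiv.Perm.mul_apply, hπ a ha]
  calc π • x = π' • (π'⁻¹ * π) • x := by rw [smul_smul, mul_inv_cancel_left]
    _ = π' • x := by rw [hfix]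

-- Atoms outside `B` are interchangeable: some permutation fixing `B` agrees with `π' * π⁻¹`
-- on `π '' C`.
lemma SupportedBy.smul_eq_smul_of_forall_eq_iff {B C : Finset Atom} {r : X}
    (hr : SupportedBy C r) {π π' : AtomPerm} (hB : SupportedBy B (π • r))
    (h : ∀ c ∈ C, ∀ b ∈ B, π c = b ↔ π' c = b) : π' • r = π • r := by
  let f : {b // b ∈ B} ⊕ {c : C // π c ∉ B} → Atom := Sum.elim (↑) fun c => π c
  let g : {b // b ∈ B} ⊕ {c : C // π c ∉ B} → Atom := Sum.elim (↑) fun c => π' c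
  have hf : f.Injective :=
    Subtype.val_injective.sumElim (fun c d hcd => Subtype.ext (Subtype.ext (π.injective hcd)))
      fun b c hbc => c.2 (hbc ▸ b.2)
  have hg : g.Injective :=
    Subtype.val_injective.sumElim (fun c d hcd => Subtype.ext (Subtype.ext (π'.injective hcd)))
      fun b c hbc => c.2 ((h c.1 c.1.2 b b.2).2 hbc.symm ▸ b.2)
  obtain ⟨σ, hσ⟩ := Equiv.Perm.exists_extending_pair f g hf hg
  have hσB : ∀ b ∈ B, σ b = b := fun b hb => hσ (Sum.inl ⟨b, hb⟩)
  have hσπ : ∀ c ∈ C, π' c = (σ * π) c := by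
    intro c hc
    by_cases hcB : π c ∈ B
    · rw [Equiv.Perm.mul_apply, hσB _ hcB]
      exact (h c hc _ hcB).1 rfl
    · exact (hσ (Sum.inr ⟨⟨c, hc⟩, hcB⟩)).symm
  rw [hr.smul_congr hσπ, mul_smul, hB σ hσB]

theorem OrbitFinite.finite_setOf_supportedBy (hX : OrbitFinite X) (B : Finset Atom) :
    {x : X | SupportedBy B x}.Finite := by
  classical
  obtain ⟨hfs, _, reps, hreps⟩ := hX
  choose C hC using hfs
  choose R hR π hπ using hreps
  have hD : ∀ r ∈ reps, SupportedBy (reps.biUnion C) r :=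
    fun r hr => (hC r).mono (Finset.subset_biUnion_of_mem C hr)
  -- An element supported by `B` is determined by its representative and by the part of the
  -- graph of `π` on the common support that lands in `B`.
  let code : X → X × Finset (Atom × Atom) :=
    fun x => (R x, (reps.biUnion C ×ˢ B).filter fun p => π x p.1 = p.2)
  refine Set.Finite.of_finite_image (f := code)
    ((reps ×ˢ (reps.biUnion C ×ˢ B).powerset).finite_toSet.subset ?_) ?_
  · rintro _ ⟨x, -, rfl⟩
    exact Finset.mem_product.2 ⟨hR x, Finset.mem_powerset.2 (Finset.filter_subset _ _)⟩
  · intro x hx y _ hxy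
    obtain ⟨hRxy, hgraph⟩ := Prod.mk.inj hxy
    have hx' : SupportedBy B (π x • R x) := by rw [(hπ x).2]; exact hx
    have hagree : ∀ c ∈ reps.biUnion C, ∀ b ∈ B, π x c = b ↔ π y c = b := by
      intro c hc b hb
      simpa [hc, hb] using Finset.ext_iff.1 hgraph (c, b)
    rw [← (hπ x).2, ← (hπ y).2, ← hRxy]
    exact ((hD _ (hR x)).smul_eq_smul_of_forall_eq_iff hx' hagree).symm

end Support

section Idempotent

variable {M : Type*} [Monoid M]

lemma exists_isIdempotentElem_pow_of_finite {u : M}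
    (h : (Set.range fun n : ℕ => u ^ (n + 1)).Finite) :
    ∃ n, 0 < n ∧ IsIdempotentElem (u ^ n) := by
  obtain ⟨m, m', hlt, heq⟩ := h.exists_lt_map_eq_of_forall_mem fun n => Set.mem_range_self n
  obtain ⟨k, rfl⟩ := Nat.exists_eq_add_of_lt hlt
  have hshift : ∀ c, u ^ (m + 1 + c + (k + 1)) = u ^ (m + 1 + c) := fun c => by
    rw [add_right_comm, pow_add, show m + 1 + (k + 1) = m + k + 1 + 1 by ring, ← heq, ← pow_add]
  have hperiod : ∀ c j, u ^ (m + 1 + c + j * (k + 1)) = u ^ (m + 1 + c) := by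
    intro c j
    induction j with
    | zero => simp
    | succ j ih =>
      rw [show m + 1 + c + (j + 1) * (k + 1) = m + 1 + (c + j * (k + 1)) + (k + 1) by ring,
        hshift, ← add_assoc, ih]
  -- From `m + 1` on the powers are periodic with period `k + 1`.
  obtain ⟨c, hc⟩ : ∃ c, (m + 1) * (k + 1) = m + 1 + c := ⟨(m + 1) * k, by ring⟩
  refine ⟨(m + 1) * (k + 1), by positivity, ?_⟩
  rw [IsIdempotentElem, ← pow_add]
  nth_rewrite 1 [hc]
  rw [hperiod, hc]

lemma eq_pow_mul_mul_pow {x u w : M} (h : x = u * x * w) (n : ℕ) : x = u ^ n * x * w ^ n := by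
  induction n with
  | zero => simp
  | succ n ih =>
    calc x = u ^ n * x * w ^ n := ih
      _ = u ^ n * (u * x * w) * w ^ n := by rw [← h]
      _ = u ^ (n + 1) * x * w ^ (n + 1) := by rw [pow_succ, pow_succ']; simp only [mul_assoc]

lemma eq_mul_pow_of_eq_mul_mul {x u w : M} {n : ℕ} (h : x = u * x * w)
    (hw : IsIdempotentElem (w ^ n)) : x = x * w ^ n := by
  have hn := eq_pow_mul_mul_pow h n
  calc x = u ^ n * x * (w ^ n * w ^ n) := by rw [hw.eq, ← hn]
    _ = x * w ^ n := by rw [← mul_assoc, ← hn]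

lemma eq_pow_mul_of_eq_mul_mul {x u w : M} {n : ℕ} (h : x = u * x * w)
    (hu : IsIdempotentElem (u ^ n)) : x = u ^ n * x := by
  have hn := eq_pow_mul_mul_pow h n
  calc x = (u ^ n * u ^ n) * x * w ^ n := by rw [hu.eq, ← hn]
    _ = u ^ n * x := by rw [mul_assoc (u ^ n), mul_assoc, ← hn]

lemma mPrefix_of_mInfix_mul (hM : ∀ w : M, ∃ n, 0 < n ∧ IsIdempotentElem (w ^ n)) {x y : M}
    (h : MInfix (x * y) x) : MPrefix (x * y) x := by
  obtain ⟨a, b, hab⟩ := h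
  obtain ⟨n, hn, hidem⟩ := hM (y * b)
  obtain ⟨m, rfl⟩ := Nat.exists_eq_add_one_of_ne_zero hn.ne'
  have hx : x = x * (y * b) ^ (m + 1) :=
    eq_mul_pow_of_eq_mul_mul (u := a) (hab.trans (by simp only [mul_assoc])) hidem
  refine ⟨b * (y * b) ^ m, ?_⟩
  calc x = x * (y * b) ^ (m + 1) := hx
    _ = x * y * (b * (y * b) ^ m) := by rw [pow_succ']; simp only [mul_assoc]

lemma mSuffix_of_mInfix_mul (hM : ∀ w : M, ∃ n, 0 < n ∧ IsIdempotentElem (w ^ n)) {x y : M}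
    (h : MInfix (y * x) x) : MSuffix (y * x) x := by
  obtain ⟨a, b, hab⟩ := h
  obtain ⟨n, hn, hidem⟩ := hM (a * y)
  obtain ⟨m, rfl⟩ := Nat.exists_eq_add_one_of_ne_zero hn.ne'
  have hx : x = (a * y) ^ (m + 1) * x :=
    eq_pow_mul_of_eq_mul_mul (w := b) (hab.trans (by simp only [mul_assoc])) hidem
  refine ⟨(a * y) ^ m * a, ?_⟩
  calc x = (a * y) ^ (m + 1) * x := hx
    _ = (a * y) ^ m * a * (y * x) := by rw [pow_succ]; simp only [mul_assoc]

end Idempotent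

theorem OrbitFiniteMonoid.exists_isIdempotentElem_pow {M : Type*} [Monoid M]
    [MulAction AtomPerm M] (hM : OrbitFiniteMonoid M) (u : M) :
    ∃ n, 0 < n ∧ IsIdempotentElem (u ^ n) := by
  obtain ⟨hX, A, hA⟩ := hM
  obtain ⟨C, hC⟩ := hX.1 u
  have hpow : ∀ n : ℕ, SupportedBy (C ∪ A) (u ^ (n + 1)) := by
    intro n
    induction n with
    | zero => simpa using hC.mono Finset.subset_union_left
    | succ n ih =>
      intro π hπ
      rw [pow_succ', hA π fun a ha => hπ a (Finset.mem_union_right _ ha),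
        hC π fun a ha => hπ a (Finset.mem_union_left _ ha), ih π hπ]
  refine exists_isIdempotentElem_pow_of_finite ((hX.finite_setOf_supportedBy (C ∪ A)).subset ?_)
  rintro _ ⟨n, rfl⟩
  exact hpow n

section Smooth

variable {M : Type*} [Monoid M]

lemma smoothSeq_pair_iff {x y : M} : SmoothSeq [x, y] ↔ MInfix (x * y) x ∧ MInfix (x * y) y := by
  simp [SmoothSeq, MInfix, eq_comm, or_imp, forall_and]

lemma SmoothSeq.of_isInfix {l l' : List M} (h : SmoothSeq l) (hl : l' <:+: l) : SmoothSeq l' := by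
  obtain ⟨s, t, rfl⟩ := hl
  intro x hx
  obtain ⟨y, z, hyz⟩ := h x (List.mem_append_left _ (List.mem_append_right _ hx))
  exact ⟨y * s.prod, t.prod * z, by simpa [List.prod_append, mul_assoc] using hyz⟩

lemma SmoothSeq.isChain {l : List M} (h : SmoothSeq l) : l.IsChain fun x y => SmoothSeq [x, y] :=
  List.isChain_iff_forall_rel_of_append_cons_cons.2 fun a b l₁ l₂ hl =>
    h.of_isInfix ⟨l₁, l₂, by simp [hl]⟩

lemma mPrefix_prod_of_isChain {a : M} {l : List M}
    (h : (a :: l).IsChain fun x y => MPrefix (x * y) x) : MPrefix (a :: l).prod a := by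
  induction l generalizing a with
  | nil => exact ⟨1, by simp⟩
  | cons b l ih =>
    rw [List.isChain_cons_cons] at h
    obtain ⟨t, ht⟩ := h.1
    obtain ⟨s, hs⟩ := ih h.2
    refine ⟨s * t, ?_⟩
    calc a = a * b * t := ht
      _ = a * ((b :: l).prod * s) * t := by rw [← hs]
      _ = (a :: b :: l).prod * (s * t) := by simp only [List.prod_cons, mul_assoc]

lemma mSuffix_prod_of_isChain {a : M} {l : List M}
    (h : (l ++ [a]).IsChain fun x y => MSuffix (x * y) y) : MSuffix (l ++ [a]).prod a := by
  induction l using List.reverseRecOn generalizing a with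
  | nil => exact ⟨1, by simp⟩
  | append_singleton l b ih =>
    obtain ⟨hchain, -, hba⟩ := List.isChain_append.1 h
    obtain ⟨t, ht⟩ := hba b (by simp) a rfl
    obtain ⟨s, hs⟩ := ih hchain
    refine ⟨t * s, ?_⟩
    calc a = t * (b * a) := ht
      _ = t * (s * (l ++ [b]).prod * a) := by rw [← hs]
      _ = t * s * (l ++ [b] ++ [a]).prod := by
        simp only [List.prod_append, List.prod_singleton, mul_assoc]

lemma smoothSeq_of_isChain {l : List M} (hpre : l.IsChain fun x y => MPrefix (x * y) x)
    (hsuf : l.IsChain fun x y => MSuffix (x * y) y) : SmoothSeq l := by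
  intro x hx
  obtain ⟨l₁, l₂, rfl⟩ := List.append_of_mem hx
  obtain ⟨t, ht⟩ := mPrefix_prod_of_isChain (List.isChain_split.1 hpre).2
  obtain ⟨s, hs⟩ := mSuffix_prod_of_isChain (List.isChain_split.1 hsuf).1
  refine ⟨s, t, ?_⟩
  calc s * (l₁ ++ x :: l₂).prod * t = s * (l₁.prod * ((x :: l₂).prod * t)) := by
        simp only [List.prod_append, mul_assoc]
    _ = s * (l₁ ++ [x]).prod := by rw [← ht, List.prod_append, List.prod_singleton]
    _ = x := hs.symm

end Smooth

/-- (Locality of smoothness) In an orbit-finite monoid, a sequence `x₁, …, x_n` is smooth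
if and only if every two-element subsequence `x_i, x_{i+1}` of consecutive elements is
smooth. -/
theorem smooth_iff_locally_smooth {M : Type*} [Monoid M] [MulAction AtomPerm M]
    (hM : OrbitFiniteMonoid M) (l : List M) :
    SmoothSeq l ↔ ∀ (i : ℕ) (h : i + 1 < l.length),
      SmoothSeq [l.get ⟨i, by omega⟩, l.get ⟨i + 1, h⟩] := by
  simp only [List.get_eq_getElem]
  rw [← List.isChain_iff_getElem (R := fun x y => SmoothSeq [x, y])]
  have hper := hM.exists_isIdempotentElem_pow
  refine ⟨SmoothSeq.isChain, fun h => smoothSeq_of_isChain ?_ ?_⟩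
  · exact h.imp fun x y hxy => mPrefix_of_mInfix_mul hper (smoothSeq_pair_iff.1 hxy).1
  · exact h.imp fun x y hxy => mSuffix_of_mInfix_mul hper (smoothSeq_pair_iff.1 hxy).2
end

section
/- The J-height of every orbit-finite monoid is finite: for every orbit-finite monoid M there exists n ∈ ℕ such that every sequence x₁, …, x_m of elements of M in which each x_i is an infix of x_{i+1} but x_{i+1} is not an infix of x_i has length m ≤ n. -/
/-!
Multiplication is supported by some finite set `A` of atoms. If `τ` fixes `A` pointwise and has
finite order, then `x ≤ τ • x` in the infix order forces `τ • x ≤ x`, by applying `τ` repeatedly.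
Orbit-finiteness gives a map from `M` to a finite set of keys such that elements with equal keys
are related by such a `τ`: the key of `x = π • r`, with `r` one of finitely many orbit
representatives, is `r` together with the part of `π` on the support of `r` that lands in `A`.
A permutation with the required values on finitely many atoms may be taken of finite order, so
the elements of a strictly increasing chain have pairwise distinct keys.
-/

theorem Equiv.Perm.exists_isOfFinOrder_eqOn {α : Type*} [DecidableEq α] (T : Finset α)
    {g : α → α} (hg : Set.InjOn g T) :
    ∃ τ : Equiv.Perm α, IsOfFinOrder τ ∧ ∀ t ∈ T, τ t = g t := by
  set F := T ∪ T.image g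
  obtain ⟨e, he⟩ := Set.MapsTo.exists_equiv_extend_of_card_eq (Fintype.card_coe F)
    (s := {t : F | (t : α) ∈ T}) (f := g ∘ Subtype.val)
    (fun t ht => Finset.mem_union_right _ (Finset.mem_image_of_mem g ht))
    (fun t ht t' ht' h => Subtype.ext (hg ht ht' h))
  refine ⟨ofSubtype e, ofSubtype.isOfFinOrder (isOfFinOrder_of_finite e), fun t ht => ?_⟩
  rw [ofSubtype_apply_of_mem e (Finset.mem_union_left _ ht)]
  exact he _ ht

theorem Equiv.Perm.exists_isOfFinOrder_fixing_eqOn {α : Type*} [DecidableEq α]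
    (σ σ' : Equiv.Perm α) (S A : Finset α) (h : ∀ s ∈ S, σ s ∈ A ∨ σ' s ∈ A → σ s = σ' s) :
    ∃ τ : Equiv.Perm α, (∀ a ∈ A, τ a = a) ∧ IsOfFinOrder τ ∧ ∀ s ∈ S, τ (σ s) = σ' s := by
  set g : α → α := fun t => if t ∈ A then t else σ' (σ⁻¹ t)
  have hmixed : ∀ t ∈ A, ∀ t' ∈ S.image σ, σ' (σ⁻¹ t') = t → t' = t := by
    intro t ht t' ht' hst
    obtain ⟨s, hs, rfl⟩ := Finset.mem_image.mp ht'
    rw [Equiv.Perm.inv_def, Equiv.symm_apply_apply] at hst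
    rw [h s hs (Or.inr (hst ▸ ht)), hst]
  have hg : Set.InjOn g ↑(S.image σ ∪ A) := by
    intro t ht t' ht' htt'
    simp only [Finset.coe_union, Set.mem_union, Finset.mem_coe] at ht ht'
    by_cases htA : t ∈ A <;> by_cases ht'A : t' ∈ A <;> simp only [g, htA, ht'A, if_true,
      if_false] at htt'
    · exact htt'
    · exact (hmixed t htA t' (ht'.resolve_right ht'A) htt'.symm).symm
    · exact hmixed t' ht'A t (ht.resolve_right htA) htt'
    · simpa using htt'
  obtain ⟨τ, hτ, hτg⟩ := exists_isOfFinOrder_eqOn _ hg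
  refine ⟨τ, fun a ha => ?_, hτ, fun s hs => ?_⟩
  · simp [hτg a (Finset.mem_union_right _ ha), g, ha]
  · rw [hτg _ (Finset.mem_union_left _ (Finset.mem_image_of_mem σ hs))]
    by_cases hsA : σ s ∈ A
    · simp only [g, if_pos hsA]
      exact h s hs (Or.inl hsA)
    · simp [g, hsA]

theorem SupportedBy.smul_eq_smul_s3 {X : Type*} [MulAction AtomPerm X] {S : Finset Atom} {x : X}
    (hx : SupportedBy S x) {π π' : AtomPerm} (h : ∀ s ∈ S, π s = π' s) : π • x = π' • x := by
  have hfix : (π'⁻¹ * π) • x = x :=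
    hx _ fun s hs => by
      rw [Equiv.Perm.mul_apply, h s hs, Equiv.Perm.inv_def, Equiv.symm_apply_apply]
  calc π • x = π' • (π'⁻¹ * π) • x := by rw [smul_smul, mul_inv_cancel_left]
    _ = π' • x := by rw [hfix]

universe u in
theorem OrbitFinite.exists_finite_key {X : Type u} [MulAction AtomPerm X] (hX : OrbitFinite X)
    (A : Finset Atom) :
    ∃ (κ : Type u) (_ : Finite κ) (key : X → κ), ∀ x y, key x = key y →
      ∃ τ : AtomPerm, (∀ a ∈ A, τ a = a) ∧ IsOfFinOrder τ ∧ τ • x = y := by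
  classical
  obtain ⟨hfs, _, R, hR⟩ := hX
  choose supp hsupp using hfs
  have hR' : ∀ x : X, ∃ r ∈ R, ∃ π : AtomPerm, π • r = x := fun x =>
    let ⟨r, hr, π, _, h⟩ := hR x; ⟨r, hr, π, h⟩
  choose rep hrep π hπ using hR'
  -- the atoms of the support of `rep x` that `π x` sends into `A`, with their images
  let trace (x : X) : Finset (Atom × Atom) := (supp (rep x) ×ˢ A).filter fun q => π x q.1 = q.2
  let K : Finset (X × Finset (Atom × Atom)) := R ×ˢ (R.biUnion supp ×ˢ A).powerset
  have hK (x : X) : (rep x, trace x) ∈ K := by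
    refine Finset.mem_product.mpr ⟨hrep x, Finset.mem_powerset.mpr ?_⟩
    exact (Finset.filter_subset _ _).trans
      (Finset.product_subset_product_left (Finset.subset_biUnion_of_mem supp (hrep x)))
  refine ⟨K, inferInstance, fun x => ⟨_, hK x⟩, fun x y hxy => ?_⟩
  obtain ⟨hrep_eq, htrace⟩ : rep x = rep y ∧ trace x = trace y :=
    Prod.mk.inj (congrArg Subtype.val hxy)
  have hagree : ∀ s ∈ supp (rep x), π x s ∈ A ∨ π y s ∈ A → π x s = π y s := by
    have hmem (z : X) (s : Atom) (hs : s ∈ supp (rep z)) (hA : π z s ∈ A) :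
        (s, π z s) ∈ trace z :=
      Finset.mem_filter.mpr ⟨Finset.mem_product.mpr ⟨hs, hA⟩, rfl⟩
    rintro s hs (hA | hA)
    · exact ((Finset.mem_filter.mp (htrace ▸ hmem x s hs hA)).2).symm
    · have hx : (s, π y s) ∈ trace x := htrace ▸ hmem y s (hrep_eq ▸ hs) hA
      exact (Finset.mem_filter.mp hx).2
  obtain ⟨τ, hτA, hτ, hτπ⟩ :=
    Equiv.Perm.exists_isOfFinOrder_fixing_eqOn (π x) (π y) (supp (rep x)) A hagree
  refine ⟨τ, hτA, hτ, ?_⟩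
  calc τ • x = (τ * π x) • rep x := by rw [mul_smul, hπ]
    _ = π y • rep x := (hsupp _).smul_eq_smul_s3 hτπ
    _ = y := by rw [hrep_eq, hπ]

section Infix

variable {M : Type*} [Monoid M] {x y z : M}

theorem MInfix.refl (x : M) : MInfix x x := ⟨1, 1, by simp⟩

theorem MInfix.trans : MInfix x y → MInfix y z → MInfix x z := by
  rintro ⟨a, b, rfl⟩ ⟨c, d, rfl⟩
  exact ⟨c * a, b * d, by simp only [mul_assoc]⟩

theorem MInfix.strict_of_chain {m : ℕ} {x : Fin m → M}
    (hx : ∀ (i : ℕ) (h : i + 1 < m), MInfix (x ⟨i, Nat.lt_of_succ_lt h⟩) (x ⟨i + 1, h⟩) ∧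
      ¬ MInfix (x ⟨i + 1, h⟩) (x ⟨i, Nat.lt_of_succ_lt h⟩))
    {i j : Fin m} (hij : i < j) : MInfix (x i) (x j) ∧ ¬ MInfix (x j) (x i) := by
  have hmono : ∀ (l k : ℕ) (hl : l < m) (hk : k < m), l ≤ k → MInfix (x ⟨l, hl⟩) (x ⟨k, hk⟩) := by
    intro l k hl hk hlk
    induction k, hlk using Nat.le_induction with
    | base => exact MInfix.refl _
    | succ k hlk ih => exact (ih (by omega)).trans (hx k hk).1
  refine ⟨hmono i j i.2 j.2 hij.le, fun hji => (hx i (by omega)).2 ?_⟩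
  exact (hmono (i + 1) j _ j.2 hij).trans hji

variable [MulAction AtomPerm M] {A : Finset Atom} {π τ : AtomPerm}

theorem MInfix.smul (hmul : FunSupportedBy A fun p : M × M => p.1 * p.2) (hπ : ∀ a ∈ A, π a = a)
    (h : MInfix x y) : MInfix (π • x) (π • y) := by
  have hmul' (u v : M) : π • (u * v) = π • u * π • v := (hmul π hπ (u, v)).symm
  obtain ⟨a, b, rfl⟩ := h
  exact ⟨π • a, π • b, by rw [hmul', hmul']⟩

-- `x ≤ τ • x ≤ τ² • x ≤ ⋯ ≤ τ ^ orderOf τ • x = x`, so in particular `τ • x ≤ x`.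
theorem MInfix.symm_of_smul_eq (hmul : FunSupportedBy A fun p : M × M => p.1 * p.2)
    (hτA : ∀ a ∈ A, τ a = a) (hτ : IsOfFinOrder τ) (hxy : τ • x = y) (h : MInfix x y) :
    MInfix y x := by
  subst hxy
  have hiter : ∀ n : ℕ, MInfix (τ • x) ((τ ^ (n + 1)) • x) := by
    intro n
    induction n with
    | zero => simpa using MInfix.refl (τ • x)
    | succ n ih =>
      rw [pow_succ', mul_smul]
      exact (h.smul hmul hτA).trans (ih.smul hmul hτA)
  have hback := hiter (orderOf τ - 1)
  rwa [Nat.sub_add_cancel hτ.orderOf_pos, pow_orderOf_eq_one, one_smul] at hback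

end Infix

/-- The J-height of every orbit-finite monoid is finite: there is a bound `n` on the length
of sequences that are strictly increasing in the infix preorder. -/
theorem jHeight_finite {M : Type*} [Monoid M] [MulAction AtomPerm M]
    (hM : OrbitFiniteMonoid M) :
    ∃ n : ℕ, ∀ (m : ℕ) (x : Fin m → M),
      (∀ (i : ℕ) (h : i + 1 < m),
        MInfix (x ⟨i, by omega⟩) (x ⟨i + 1, h⟩) ∧ ¬ MInfix (x ⟨i + 1, h⟩) (x ⟨i, by omega⟩)) →
      m ≤ n := by
  obtain ⟨hX, A, hmul⟩ := hM
  have hmulA : FunSupportedBy A fun p : M × M => p.1 * p.2 := fun π hπ p => (hmul π hπ p.1 p.2).symm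
  obtain ⟨κ, _, key, hkey⟩ := hX.exists_finite_key A
  refine ⟨Nat.card κ, fun m x hx => ?_⟩
  have hne : ∀ i j : Fin m, i < j → key (x i) ≠ key (x j) := by
    intro i j hij hkij
    obtain ⟨τ, hτA, hτ, hτx⟩ := hkey _ _ hkij
    obtain ⟨hle, hnot⟩ := MInfix.strict_of_chain hx hij
    exact hnot (hle.symm_of_smul_eq hmulA hτA hτ hτx)
  have hinj : Function.Injective (key ∘ x) := by
    intro i j hij
    by_contra hne'
    rcases lt_or_gt_of_ne hne' with h | h
    · exact hne i j h hij
    · exact hne j i h hij.symm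
  simpa using Nat.card_le_card_of_injective _ hinj
end
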